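/- arXiv:1906.08799 — 2 statements merged into one kernel-verified Lean document; each statement's English description precedes it below -/
import Mathlib

section
/- For all real numbers a > 0 and b > 0, (√a − √b)² ≤ (1/4)·max(a,b)·(log(a/b))². -/
/-!
With `s = √a` and `t = √b`, the claim is `|s - t| ≤ max s t * |log (s / t)|` squared, because
`log (s / t) = log (a / b) / 2`. For `t ≤ s` that inequality is `1 - t / s ≤ log (s / t)`,
i.e. `log u ≤ u - 1` at `u = t / s`, multiplied by `s`.
-/

open Real

lemma sub_le_mul_log_div {x y : ℝ} (hx : 0 < x) (hy : 0 < y) : x - y ≤ x * log (x / y) := by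
  have h : 1 - (x / y)⁻¹ ≤ log (x / y) := one_sub_inv_le_log_of_pos (div_pos hx hy)
  calc x - y = x * (1 - (x / y)⁻¹) := by field_simp
    _ ≤ x * log (x / y) := mul_le_mul_of_nonneg_left h hx.le

lemma abs_sub_le_max_mul_abs_log_div {x y : ℝ} (hx : 0 < x) (hy : 0 < y) :
    |x - y| ≤ max x y * |log (x / y)| := by
  wlog hyx : y ≤ x generalizing x y
  · have hlog : |log (y / x)| = |log (x / y)| := by rw [← inv_div, log_inv, abs_neg]
    simpa only [abs_sub_comm, max_comm, hlog] using this hy hx (le_of_not_ge hyx)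
  calc |x - y| = x - y := abs_of_nonneg (sub_nonneg.mpr hyx)
    _ ≤ x * log (x / y) := sub_le_mul_log_div hx hy
    _ ≤ max x y * |log (x / y)| :=
      mul_le_mul (le_max_left x y) (le_abs_self _)
        (log_nonneg ((one_le_div hy).mpr hyx)) (hx.le.trans (le_max_left x y))

/-- For `a, b > 0`, `(√a − √b)² ≤ (1/4)·max(a,b)·(log(a/b))²`. -/
theorem stmt_5 (a b : ℝ) (ha : 0 < a) (hb : 0 < b) :
    (Real.sqrt a - Real.sqrt b) ^ 2 ≤ (1 / 4) * max a b * Real.log (a / b) ^ 2 := by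
  have hmax : max √a √b ^ 2 = max a b := by
    rw [← sqrt_monotone.map_max, sq_sqrt (ha.le.trans (le_max_left a b))]
  have hlog : log (√a / √b) = log (a / b) / 2 := by
    rw [← sqrt_div ha.le, log_sqrt (div_pos ha hb).le]
  calc (√a - √b) ^ 2 = |√a - √b| ^ 2 := (sq_abs _).symm
    _ ≤ (max √a √b * |log (√a / √b)|) ^ 2 :=
      pow_le_pow_left₀ (abs_nonneg _)
        (abs_sub_le_max_mul_abs_log_div (sqrt_pos.mpr ha) (sqrt_pos.mpr hb)) 2
    _ = (1 / 4) * max a b * log (a / b) ^ 2 := by rw [mul_pow, sq_abs, hmax, hlog]; ring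
end

section
/- Let d and n be positive integers, let 0 < m ≤ M < ∞, let λ, λ' : [0,1]^d → [m,M] be measurable, and let γ₁,…,γₙ : [0,1]^d → [0,1] be measurable. Then (1/n)·∑_{i=1}^n [ ∫_{[0,1]^d} γᵢ(x)·(λ(x) − λ'(x)) dx + ∫_{[0,1]^d} γᵢ(x)·λ'(x)·log(λ'(x)/λ(x)) dx ] ≤ (3/n)·∑_{i=1}^n ∫_{[0,1]^d} γᵢ(x)·(√(λ(x)) − √(λ'(x)))² dx + (1/n)·∑_{i=1}^n ∫_{[0,1]^d} γᵢ(x)·λ'(x)·(log(λ'(x)/λ(x)))² dx. -/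
open MeasureTheory Real Set
open scoped ENNReal

/-! The inequality holds pointwise under the integral signs. Writing `λ = λ' e^{2u}`, the integrand
of the left side is `λ' (e^{2u} - 1 - 2u)` and that of the right side is
`λ' (3 (e^u - 1)² + 4u²)`, so everything reduces to a one-variable inequality for the exponential,
which follows from `e^u ≥ 1 + u` and `e^{-u} ≥ 1 - u`. All integrands are continuous functions of
`(γᵢ, λ, λ')` on a compact box, hence integrable over the unit cube. -/

theorem exp_two_mul_sub_one_sub_two_mul_le (u : ℝ) :
    exp (2 * u) - 1 - 2 * u ≤ 3 * (exp u - 1) ^ 2 + 4 * u ^ 2 := by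
  have hexp : u + 1 ≤ exp u := add_one_le_exp u
  have hexp_neg : exp u * (-u + 1) ≤ 1 := by
    calc exp u * (-u + 1) ≤ exp u * exp (-u) := by gcongr; exact add_one_le_exp (-u)
      _ = 1 := by rw [← exp_add, add_neg_cancel, exp_zero]
  rw [two_mul, exp_add]
  nlinarith [sq_nonneg (exp u - 1 - u), sq_nonneg (exp u - 1), sq_nonneg u, exp_pos u]

theorem sub_add_mul_log_div_le {a b : ℝ} (ha : 0 < a) (hb : 0 < b) :
    a - b + b * log (b / a) ≤ 3 * (√a - √b) ^ 2 + b * log (b / a) ^ 2 := by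
  set u := log (a / b) / 2
  have ha_eq : a = b * exp u ^ 2 := by
    rw [← exp_nat_mul, Nat.cast_ofNat, mul_div_cancel₀ _ two_ne_zero, exp_log (div_pos ha hb),
      mul_div_cancel₀ _ hb.ne']
  have hsqrt : √a = √b * exp u := by
    rw [ha_eq, sqrt_mul hb.le, sqrt_sq (exp_pos u).le]
  have hlog : log (b / a) = -(2 * u) := by
    rw [← inv_div, log_inv]; ring
  have key := mul_le_mul_of_nonneg_left (exp_two_mul_sub_one_sub_two_mul_le u) hb.le
  rw [hlog, hsqrt, ha_eq]
  rw [two_mul u, exp_add] at key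
  nlinarith [sq_sqrt hb.le]

section SetIntegral

variable {α : Type*} [MeasurableSpace α] {μ : Measure α} {S : Set α}

theorem integrableOn_comp_of_mapsTo_isCompact {β : Type*} [TopologicalSpace β]
    [MeasurableSpace β] (hS : MeasurableSet S) (hμS : μ S ≠ ∞) {K : Set β} (hK : IsCompact K)
    {F : β → ℝ} (hF : Measurable F) (hFK : ∀ p ∈ K, ContinuousAt F p) {f : α → β}
    (hf : Measurable f) (hfS : MapsTo f S K) : IntegrableOn (F ∘ f) S μ := by
  obtain ⟨C, hC⟩ := hK.exists_bound_of_continuousOn (continuousOn_of_forall_continuousAt hFK)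
  exact Measure.integrableOn_of_bounded (M := C) hμS (hF.comp hf).aestronglyMeasurable <|
    (ae_restrict_iff' hS).2 (.of_forall fun x hx => hC _ (hfS hx))

variable {g l l' : α → ℝ} {m M : ℝ}

theorem setIntegral_kl_le_three_mul_hellinger_add_variance (hS : MeasurableSet S)
    (hμS : μ S ≠ ∞) (hm : 0 < m) (hg : Measurable g) (hl : Measurable l) (hl' : Measurable l')
    (hgS : ∀ x ∈ S, g x ∈ Icc 0 1) (hlS : ∀ x ∈ S, l x ∈ Icc m M)
    (hl'S : ∀ x ∈ S, l' x ∈ Icc m M) :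
    (∫ x in S, g x * (l x - l' x) ∂μ) + ∫ x in S, g x * l' x * log (l' x / l x) ∂μ
      ≤ 3 * (∫ x in S, g x * (√(l x) - √(l' x)) ^ 2 ∂μ)
        + ∫ x in S, g x * l' x * log (l' x / l x) ^ 2 ∂μ := by
  set K : Set (ℝ × ℝ × ℝ) := Icc 0 1 ×ˢ Icc m M ×ˢ Icc m M
  have hK : IsCompact K := isCompact_Icc.prod (isCompact_Icc.prod isCompact_Icc)
  have hfS : MapsTo (fun x => (g x, l x, l' x)) S K := fun x hx =>
    ⟨hgS x hx, hlS x hx, hl'S x hx⟩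
  have hf : Measurable fun x => (g x, l x, l' x) := by fun_prop
  have hpos : ∀ p ∈ K, 0 < p.2.1 ∧ 0 < p.2.2 := fun p hp =>
    ⟨hm.trans_le hp.2.1.1, hm.trans_le hp.2.2.1⟩
  have integrable {F : ℝ × ℝ × ℝ → ℝ} (hF : Measurable F)
      (hFK : ∀ p : ℝ × ℝ × ℝ, 0 < p.2.1 → 0 < p.2.2 → ContinuousAt F p) :
      IntegrableOn (F ∘ fun x => (g x, l x, l' x)) S μ :=
    integrableOn_comp_of_mapsTo_isCompact hS hμS hK hF
      (fun p hp => hFK p (hpos p hp).1 (hpos p hp).2) hf hfS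
  have I₁ : IntegrableOn (fun x => g x * (l x - l' x)) S μ :=
    integrable (F := fun p => p.1 * (p.2.1 - p.2.2)) (by fun_prop) fun _ _ _ => by fun_prop
  have I₂ : IntegrableOn (fun x => g x * l' x * log (l' x / l x)) S μ :=
    integrable (F := fun p => p.1 * p.2.2 * log (p.2.2 / p.2.1)) (by fun_prop)
      fun _ _ _ => by fun_prop (disch := positivity)
  have I₃ : IntegrableOn (fun x => g x * (√(l x) - √(l' x)) ^ 2) S μ :=
    integrable (F := fun p => p.1 * (√p.2.1 - √p.2.2) ^ 2) (by fun_prop) fun _ _ _ => by fun_prop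
  have I₄ : IntegrableOn (fun x => g x * l' x * log (l' x / l x) ^ 2) S μ :=
    integrable (F := fun p => p.1 * p.2.2 * log (p.2.2 / p.2.1) ^ 2) (by fun_prop)
      fun _ _ _ => by fun_prop (disch := positivity)
  rw [← integral_add I₁ I₂, ← integral_const_mul, ← integral_add (I₃.const_mul 3) I₄]
  refine setIntegral_mono_on (I₁.add I₂) ((I₃.const_mul 3).add I₄) hS fun x hx => ?_
  obtain ⟨hl_pos, hl'_pos⟩ := hpos _ (hfS hx)
  have := mul_le_mul_of_nonneg_left (sub_add_mul_log_div_le hl_pos hl'_pos) (hgS x hx).1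
  linarith

end SetIntegral

theorem stmt_7_general (d n : ℕ) (m M : ℝ) (hm : 0 < m)
    (lam lam' : (Fin d → ℝ) → ℝ) (hml : Measurable lam) (hml' : Measurable lam')
    (hbd : ∀ x ∈ Set.Icc (0 : Fin d → ℝ) 1, lam x ∈ Set.Icc m M)
    (hbd' : ∀ x ∈ Set.Icc (0 : Fin d → ℝ) 1, lam' x ∈ Set.Icc m M)
    (γ : Fin n → (Fin d → ℝ) → ℝ) (hγm : ∀ i, Measurable (γ i))
    (hγ : ∀ i, ∀ x ∈ Set.Icc (0 : Fin d → ℝ) 1, γ i x ∈ Set.Icc (0 : ℝ) 1) :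
    (1 / n : ℝ) * ∑ i : Fin n,
        ((∫ x in Set.Icc (0 : Fin d → ℝ) 1, γ i x * (lam x - lam' x)) +
          ∫ x in Set.Icc (0 : Fin d → ℝ) 1, γ i x * lam' x * Real.log (lam' x / lam x))
      ≤ (3 / n : ℝ) * ∑ i : Fin n,
          (∫ x in Set.Icc (0 : Fin d → ℝ) 1,
            γ i x * (Real.sqrt (lam x) - Real.sqrt (lam' x)) ^ 2) +
        (1 / n : ℝ) * ∑ i : Fin n,
          ∫ x in Set.Icc (0 : Fin d → ℝ) 1,
            γ i x * lam' x * Real.log (lam' x / lam x) ^ 2 := by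
  calc _ ≤ (1 / n : ℝ) * ∑ i : Fin n,
        (3 * (∫ x in Icc (0 : Fin d → ℝ) 1, γ i x * (√(lam x) - √(lam' x)) ^ 2) +
          ∫ x in Icc (0 : Fin d → ℝ) 1, γ i x * lam' x * log (lam' x / lam x) ^ 2) := by
        refine mul_le_mul_of_nonneg_left (Finset.sum_le_sum fun i _ => ?_) (by positivity)
        exact setIntegral_kl_le_three_mul_hellinger_add_variance measurableSet_Icc
          isCompact_Icc.measure_lt_top.ne hm (hγm i) hml hml' (hγ i) hbd hbd'
    _ = _ := by rw [Finset.sum_add_distrib, ← Finset.mul_sum]; ring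

/-- The averaged Kullback–Leibler divergence between filtered Poisson process laws is bounded
by three times the averaged squared Hellinger-type `L²` distance of root rate functions plus
the averaged variance measure (inequality (lem1.2) of the paper). -/
theorem stmt_7 (d n : ℕ) (hd : 0 < d) (hn : 0 < n) (m M : ℝ) (hm : 0 < m) (hmM : m ≤ M)
    (lam lam' : (Fin d → ℝ) → ℝ) (hml : Measurable lam) (hml' : Measurable lam')
    (hbd : ∀ x ∈ Set.Icc (0 : Fin d → ℝ) 1, lam x ∈ Set.Icc m M)
    (hbd' : ∀ x ∈ Set.Icc (0 : Fin d → ℝ) 1, lam' x ∈ Set.Icc m M)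
    (γ : Fin n → (Fin d → ℝ) → ℝ) (hγm : ∀ i, Measurable (γ i))
    (hγ : ∀ i, ∀ x ∈ Set.Icc (0 : Fin d → ℝ) 1, γ i x ∈ Set.Icc (0 : ℝ) 1) :
    (1 / n : ℝ) * ∑ i : Fin n,
        ((∫ x in Set.Icc (0 : Fin d → ℝ) 1, γ i x * (lam x - lam' x)) +
          ∫ x in Set.Icc (0 : Fin d → ℝ) 1, γ i x * lam' x * Real.log (lam' x / lam x))
      ≤ (3 / n : ℝ) * ∑ i : Fin n,
          (∫ x in Set.Icc (0 : Fin d → ℝ) 1,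
            γ i x * (Real.sqrt (lam x) - Real.sqrt (lam' x)) ^ 2) +
        (1 / n : ℝ) * ∑ i : Fin n,
          ∫ x in Set.Icc (0 : Fin d → ℝ) 1,
            γ i x * lam' x * Real.log (lam' x / lam x) ^ 2 :=
  stmt_7_general d n m M hm lam lam' hml hml' hbd hbd' γ hγm hγ
end
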